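/- Let S and T be inverse semigroups such that the presheaf categories PSh(L(S)) and PSh(L(T)) are equivalent (i.e. S and T are Morita equivalent). If S is locally E-unitary, then T is locally E-unitary. -/

import Mathlib

universe u

open CategoryTheory

/-- An inverse semigroup: every element has a unique (von Neumann) inverse,
selected by `star`. -/
class InverseSemigroup (S : Type u) extends Semigroup S where
  star : S → S
  mul_star_mul : ∀ s : S, s * star s * s = s
  star_mul_star : ∀ s : S, star s * s * star s = star s
  star_unique : ∀ s t : S, s * t * s = s → t * s * t = t → t = star s

namespace InverseSemigroup

variable {S : Type u} [InverseSemigroup S]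

theorem star_star (s : S) : star (star s) = s :=
  (star_unique (star s) s (star_mul_star s) (mul_star_mul s)).symm

theorem star_idem {e : S} (he : e * e = e) : star e = e :=
  (star_unique e e (by rw [he, he]) (by rw [he, he])).symm

theorem mul_idem {e f : S} (he : e * e = e) (hf : f * f = f) :
    (e * f) * (e * f) = e * f := by
  set x := star (e * f) with hx
  have hxfix : (e * f) * x * (e * f) = e * f := mul_star_mul (e * f)
  have hxfix' : x * (e * f) * x = x := star_mul_star (e * f)
  have he1 : ∀ y : S, e * (e * y) = e * y := fun y => by rw [← mul_assoc, he]
  have hf1 : ∀ y : S, f * (f * y) = f * y := fun y => by rw [← mul_assoc, hf]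
  have A : e * (f * (x * (e * f))) = e * f := by
    simpa only [mul_assoc] using hxfix
  have B1 : ∀ y : S, x * (e * (f * (x * y))) = x * y := fun y => by
    have h := congrArg (· * y) hxfix'
    simpa only [mul_assoc] using h
  have h1 : (e * f) * (f * x * e) * (e * f) = e * f := by
    simp only [mul_assoc, hf1, he1]
    exact A
  have h2 : (f * x * e) * (e * f) * (f * x * e) = f * x * e := by
    simp only [mul_assoc, he1, hf1, B1]
  have hC : f * x * e = x := by
    have := star_unique (e * f) (f * x * e) h1 h2
    rwa [← hx] at this
  have hCn : f * (x * e) = x := by simpa only [mul_assoc] using hC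
  have key : (f * (x * e)) * (f * (x * e)) = f * (x * e) := by
    simp only [mul_assoc, B1]
  have hD : x * x = x := by rw [← hCn]; exact key
  have hE : e * f = x := (star_unique x (e * f) hxfix' hxfix).trans (star_idem hD)
  rw [hE]; exact hD

theorem idem_comm {e f : S} (he : e * e = e) (hf : f * f = f) :
    e * f = f * e := by
  have hef : (e * f) * (e * f) = e * f := mul_idem he hf
  have hfe : (f * e) * (f * e) = f * e := mul_idem hf he
  have he1 : ∀ y : S, e * (e * y) = e * y := fun y => by rw [← mul_assoc, he]
  have hf1 : ∀ y : S, f * (f * y) = f * y := fun y => by rw [← mul_assoc, hf]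
  have hefn : e * (f * (e * f)) = e * f := by simpa only [mul_assoc] using hef
  have hfen : f * (e * (f * e)) = f * e := by simpa only [mul_assoc] using hfe
  have h1 : (e * f) * (f * e) * (e * f) = e * f := by
    simp only [mul_assoc, hf1, he1]
    exact hefn
  have h2 : (f * e) * (e * f) * (f * e) = f * e := by
    simp only [mul_assoc, he1, hf1]
    exact hfen
  have := star_unique (e * f) (f * e) h1 h2
  rw [this, star_idem hef]

theorem star_mul (a b : S) : star (a * b) = star b * star a := by
  set u := star a with hu
  set v := star b with hv
  have han : a * (u * a) = a := by simpa only [mul_assoc] using mul_star_mul a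
  have hun : u * (a * u) = u := by simpa only [mul_assoc] using star_mul_star a
  have hbn : b * (v * b) = b := by simpa only [mul_assoc] using mul_star_mul b
  have hvn : v * (b * v) = v := by simpa only [mul_assoc] using star_mul_star b
  have ha1 : ∀ y : S, a * (u * (a * y)) = a * y := fun y => by
    have h := congrArg (· * y) (mul_star_mul a); simpa only [mul_assoc] using h
  have hv1 : ∀ y : S, v * (b * (v * y)) = v * y := fun y => by
    have h := congrArg (· * y) (star_mul_star b); simpa only [mul_assoc] using h
  have hua : (u * a) * (u * a) = u * a := by
    simp only [mul_assoc]; rw [han]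
  have hbv : (b * v) * (b * v) = b * v := by
    simp only [mul_assoc]; rw [hvn]
  have hc : (b * v) * (u * a) = (u * a) * (b * v) := idem_comm hbv hua
  have hc1 : ∀ y : S, b * (v * (u * (a * y))) = u * (a * (b * (v * y))) := fun y => by
    have h := congrArg (· * y) hc; simpa only [mul_assoc] using h
  have goal1 : (a * b) * (v * u) * (a * b) = a * b := by
    simp only [mul_assoc]
    rw [hc1, ha1, hbn]
  have goal2 : (v * u) * (a * b) * (v * u) = v * u := by
    simp only [mul_assoc]
    rw [← hc1, hv1, hun]
  exact ((star_unique (a * b) (v * u) goal1 goal2)).symm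

theorem star_mul_self_idem (s : S) : (star s * s) * (star s * s) = star s * s := by
  have h := congrArg (star s * ·) (mul_star_mul s)
  simpa only [mul_assoc] using h

theorem mul_star_self_idem (s : S) : (s * star s) * (s * star s) = s * star s := by
  have h := congrArg (· * star s) (mul_star_mul s)
  simpa only [mul_assoc] using h

end InverseSemigroup

open InverseSemigroup

/-- The left-cancellative category `L(S)` of an inverse semigroup `S`: objects are
the idempotents, and a morphism `f ⟶ e` is an element `s` with `e * s = s` and
`s* * s = f`; composition is multiplication. -/
def LCat (S : Type u) [InverseSemigroup S] : Type u := {e : S // e * e = e}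

namespace LCat

variable {S : Type u} [InverseSemigroup S]

instance : Category.{u} (LCat S) where
  Hom f e := {s : S // e.1 * s = s ∧ star s * s = f.1}
  id e := ⟨e.1, by rw [e.2], by rw [star_idem e.2, e.2]⟩
  comp := fun {f g e} u v => ⟨v.1 * u.1, by
      constructor
      · rw [← mul_assoc, v.2.1]
      · calc star (v.1 * u.1) * (v.1 * u.1)
            = star u.1 * ((star v.1 * v.1) * u.1) := by
              rw [InverseSemigroup.star_mul]; simp only [mul_assoc]
          _ = star u.1 * (g.1 * u.1) := by rw [v.2.2]
          _ = star u.1 * u.1 := by rw [u.2.1]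
          _ = f.1 := u.2.2⟩
  id_comp := fun {f e} u => by
    apply Subtype.ext
    show u.1 * f.1 = u.1
    have h2 := u.2.2
    calc u.1 * f.1 = u.1 * (star u.1 * u.1) := by rw [h2]
      _ = u.1 := by rw [← mul_assoc, mul_star_mul]
  comp_id := fun {f e} u => by
    apply Subtype.ext
    show e.1 * u.1 = u.1
    exact u.2.1
  assoc := fun u v w => Subtype.ext (mul_assoc w.1 v.1 u.1).symm

end LCat

/-- An inverse semigroup is locally E-unitary if each local submonoid `eSe` is
E-unitary: whenever `d ∈ eSe` is idempotent, `s ∈ eSe`, and `d ≤ s` in the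
natural partial order (`d = s * d* * d`), then `s` is idempotent. -/
def LocallyEUnitary (S : Type u) [InverseSemigroup S] : Prop :=
  ∀ e : S, e * e = e →
    ∀ s d : S, e * s * e = s → e * d * e = d → d * d = d →
      d = s * star d * d → s * s = s

/-! A locally E-unitary inverse semigroup is exactly one whose category `L(S)` has only
epimorphisms: right cancellation `s v = u v → s = u` in `L(S)` follows from local E-unitarity
applied to `u* s` and `s u*`, and conversely `d ≤ s` in `eSe` yields two morphisms
`s, s* s : s* s ⟶ e` equalized by `d`.

This property passes along an equivalence `PSh(C) ≌ PSh(D)`. The equivalence sends a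
representable of `D` to a projective presheaf through which maps into coproducts factor through
a summand, hence to a retract of a representable of `C`; it also has an element somewhere.
A pair of maps in `D` equalized by a morphism therefore yields, through these retractions, a pair
of morphisms of `C` equalized by a morphism, which must agree. -/

namespace InverseSemigroup

variable {S : Type u} [InverseSemigroup S]

theorem mul_star_mul_self (s : S) : s * (star s * s) = s := by
  rw [← mul_assoc, mul_star_mul]

theorem star_mul_of_mul_eq {e s : S} (he : e * e = e) (h : e * s = s) :
    star s * e = star s := by
  simpa only [star_mul, star_idem he] using congrArg star h

theorem mul_star_of_mul_eq {e s : S} (he : e * e = e) (h : s * e = s) :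
    e * star s = star s := by
  simpa only [star_mul, star_idem he] using congrArg star h

theorem idem_mul_eq_of_mul_mul_eq {e s : S} (he : e * e = e) (h : e * s * e = s) : e * s = s := by
  rw [← h, ← mul_assoc, ← mul_assoc, he]

theorem mul_idem_eq_of_mul_mul_eq {e s : S} (he : e * e = e) (h : e * s * e = s) : s * e = s := by
  rw [← h, mul_assoc, he]

theorem star_mul_self_mul_eq_of_mul_eq {s d : S} (hd : d * d = d) (h : s * d = d) :
    star s * s * d = d := by
  have hds : d * star s = d := by simpa only [star_mul, star_idem hd] using congrArg star h
  have hdFd : d * (star s * s) * d = d := by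
    rw [mul_assoc d, mul_assoc, h, ← mul_assoc, hds, hd]
  calc star s * s * d = star s * s * d * d := by rw [mul_assoc _ d, hd]
    _ = d * (star s * s) * d := by rw [idem_comm (star_mul_self_idem s) hd]
    _ = d := hdFd

/-- Compatible elements (`u* s` and `s u*` idempotent) with the same domain are equal. -/
theorem eq_of_compatible {s u : S} (hdom : star s * s = star u * u)
    (h₁ : star u * s * (star u * s) = star u * s) (h₂ : s * star u * (s * star u) = s * star u) :
    s = u := by
  have e₁ : star s * u = star u * s := by
    simpa only [star_mul, star_star] using star_idem h₁
  have e₂ : u * star s = s * star u := by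
    simpa only [star_mul, star_star] using star_idem h₂
  have hs : s = u * (star u * s) := by
    calc s = s * (star u * u) := by rw [← hdom, mul_star_mul_self]
      _ = u * (star u * s) := by rw [← mul_assoc, ← e₂, mul_assoc, e₁]
  have hu : u = s * (star u * s) := by
    calc u = u * (star s * s) := by rw [hdom, mul_star_mul_self]
      _ = s * (star u * s) := by rw [← mul_assoc, e₂, mul_assoc]
  calc s = u * (star u * s) * (star u * s) := by rw [mul_assoc u, h₁, ← hs]
    _ = u := by rw [← hs, ← hu]

end InverseSemigroup

open InverseSemigroup

/-- The E-unitary condition in `eSe`, with the witness `w w*` below `x` given through `w`. -/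
theorem LocallyEUnitary.mul_self_eq {S : Type u} [InverseSemigroup S] (hS : LocallyEUnitary S)
    {e x w : S} (he : e * e = e) (hex : e * x = x) (hxe : x * e = x) (hew : e * w = w)
    (hxw : x * w = w) : x * x = x := by
  have hd : w * star w * (w * star w) = w * star w := mul_star_self_idem w
  refine hS e he x (w * star w) (by rw [hex, hxe]) ?_ hd ?_
  · rw [← mul_assoc, hew, mul_assoc, star_mul_of_mul_eq he hew]
  · rw [star_idem hd, ← mul_assoc, ← mul_assoc, hxw, mul_assoc, hd]

/-- Right cancellation in `L(S)`, for `s u : f ⟶ e` and `v : _ ⟶ f`. -/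
theorem LocallyEUnitary.eq_of_mul_eq {S : Type u} [InverseSemigroup S] (hS : LocallyEUnitary S)
    {e f s u v : S} (he : e * e = e) (hf : f * f = f) (hes : e * s = s) (hss : star s * s = f)
    (heu : e * u = u) (huu : star u * u = f) (hfv : f * v = v) (hv : s * v = u * v) : s = u := by
  have hsf : s * f = s := by rw [← hss, mul_star_mul_self]
  have huf : u * f = u := by rw [← huu, mul_star_mul_self]
  have h₁ : star u * s * (star u * s) = star u * s := by
    refine hS.mul_self_eq hf ?_ (by rw [mul_assoc, hsf]) hfv (w := v) ?_
    · rw [← mul_assoc, mul_star_of_mul_eq hf huf]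
    · rw [mul_assoc, hv, ← mul_assoc, huu, hfv]
  have h₂ : s * star u * (s * star u) = s * star u := by
    refine hS.mul_self_eq he (by rw [← mul_assoc, hes]) ?_ (by rw [← mul_assoc, heu])
      (w := u * v) ?_
    · rw [mul_assoc, star_mul_of_mul_eq he heu]
    · rw [mul_assoc, ← mul_assoc (star u), huu, ← mul_assoc, hsf, hv]
  exact eq_of_compatible (hss.trans huu.symm) h₁ h₂

theorem LCat.epi_of_locallyEUnitary {S : Type u} [InverseSemigroup S] (hS : LocallyEUnitary S)
    {d f : LCat S} (t : d ⟶ f) : Epi t :=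
  ⟨fun {e} α β h => Subtype.ext <| hS.eq_of_mul_eq e.2 f.2 α.2.1 α.2.2 β.2.1 β.2.2 t.2.1
    (congrArg Subtype.val h)⟩

theorem locallyEUnitary_of_forall_epi {S : Type u} [InverseSemigroup S]
    (h : ∀ {a b : LCat S} (t : a ⟶ b), Epi t) : LocallyEUnitary S := by
  intro e he s d hs _ hd hle
  have hsd : s * d = d := by rw [star_idem hd, mul_assoc, hd] at hle; exact hle.symm
  have hF := star_mul_self_idem s
  have hFd : star s * s * d = d := star_mul_self_mul_eq_of_mul_eq hd hsd
  have hes := idem_mul_eq_of_mul_mul_eq he hs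
  let oD : LCat S := ⟨d, hd⟩
  let oF : LCat S := ⟨star s * s, hF⟩
  let oE : LCat S := ⟨e, he⟩
  let t : oD ⟶ oF := ⟨d, hFd, by rw [star_idem hd, hd]⟩
  let α : oF ⟶ oE := ⟨s, hes, rfl⟩
  let β : oF ⟶ oE :=
    ⟨star s * s, by rw [← mul_assoc, mul_star_of_mul_eq he (mul_idem_eq_of_mul_mul_eq he hs)],
      by rw [star_idem hF, hF]⟩
  have hαβ : α = β := (h t).left_cancellation α β (Subtype.ext (hsd.trans hFd.symm))
  have hsF : s = star s * s := congrArg Subtype.val hαβ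
  rwa [← hsF] at hF

theorem locallyEUnitary_iff_forall_epi {S : Type u} [InverseSemigroup S] :
    LocallyEUnitary S ↔ ∀ {a b : LCat S} (t : a ⟶ b), Epi t :=
  ⟨fun hS _ _ => LCat.epi_of_locallyEUnitary hS, locallyEUnitary_of_forall_epi⟩

section Presheaf

open Limits Opposite

variable {C D : Type u} [SmallCategory C] [SmallCategory D]

theorem projective_yoneda_obj (c : C) : Projective (yoneda.obj c) where
  factors {_ _} g e he := by
    obtain ⟨x, hx⟩ := (epi_iff_surjective _).mp ((NatTrans.epi_iff_epi_app e).mp he (op c))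
      (yonedaEquiv g)
    exact ⟨yonedaEquiv.symm x, yonedaEquiv.injective (by
      rw [yonedaEquiv_comp, Equiv.apply_symm_apply, hx])⟩

noncomputable def sigmaYonedaDesc (P : Cᵒᵖ ⥤ Type u) :
    ∐ (fun x : (c : C) × P.obj (op c) => yoneda.obj x.1) ⟶ P :=
  Sigma.desc fun x => yonedaEquiv.symm x.2

theorem ι_sigmaYonedaDesc (P : Cᵒᵖ ⥤ Type u) {c : C} (x : P.obj (op c)) :
    Sigma.ι _ ⟨c, x⟩ ≫ sigmaYonedaDesc P = yonedaEquiv.symm x :=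
  Sigma.ι_desc _ _

instance epi_sigmaYonedaDesc (P : Cᵒᵖ ⥤ Type u) : Epi (sigmaYonedaDesc P) := by
  refine ⟨fun {Z} u v h => ?_⟩
  ext ⟨c⟩ x
  have := congrArg yonedaEquiv
    (Sigma.ι (fun y : (c : C) × P.obj (op c) => yoneda.obj y.1) ⟨c, x⟩ ≫= h)
  simp only [← Category.assoc, ι_sigmaYonedaDesc, yonedaEquiv_comp, Equiv.apply_symm_apply] at this
  exact this

theorem exists_comp_sigma_ι_eq_of_yoneda {J : Type u} (X : J → Cᵒᵖ ⥤ Type u) {c : C}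
    (g : yoneda.obj c ⟶ ∐ X) : ∃ (j : J) (w : yoneda.obj c ⟶ X j), w ≫ Sigma.ι X j = g := by
  obtain ⟨⟨j⟩, y, hy⟩ := FunctorToTypes.jointly_surjective' _ (op c) (yonedaEquiv g)
  refine ⟨j, yonedaEquiv.symm y, yonedaEquiv.injective ?_⟩
  rw [yonedaEquiv_comp, Equiv.apply_symm_apply, hy]

theorem exists_retract_yoneda_of_projective (P : Cᵒᵖ ⥤ Type u) [Projective P]
    (hP : ∀ (J : Type u) (X : J → Cᵒᵖ ⥤ Type u) (g : P ⟶ ∐ X),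
      ∃ (j : J) (w : P ⟶ X j), w ≫ Sigma.ι X j = g) :
    ∃ c : C, Nonempty (Retract P (yoneda.obj c)) := by
  obtain ⟨⟨c, x⟩, w, hw⟩ := hP _ _ (Projective.factorThru (𝟙 P) (sigmaYonedaDesc P))
  refine ⟨c, ⟨{ i := w, r := yonedaEquiv.symm x, retract := ?_ }⟩⟩
  rw [← ι_sigmaYonedaDesc, ← Category.assoc, hw, Projective.factorThru_comp]

theorem CategoryTheory.Equivalence.exists_comp_sigma_ι_eq_inverse_yoneda
    (e : (Cᵒᵖ ⥤ Type u) ≌ (Dᵒᵖ ⥤ Type u)) (d : D) (J : Type u) (X : J → Cᵒᵖ ⥤ Type u)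
    (g : e.inverse.obj (yoneda.obj d) ⟶ ∐ X) :
    ∃ (j : J) (w : e.inverse.obj (yoneda.obj d) ⟶ X j), w ≫ Sigma.ι X j = g := by
  obtain ⟨j, w, hw⟩ := exists_comp_sigma_ι_eq_of_yoneda _
    (e.counitInv.app (yoneda.obj d) ≫ e.functor.map g ≫ (PreservesCoproduct.iso e.functor X).hom)
  refine ⟨j, e.functor.preimage (e.counit.app _ ≫ w), e.functor.map_injective ?_⟩
  rw [Functor.map_comp, Functor.map_preimage, Category.assoc, ← ι_comp_sigmaComparison,
    ← PreservesCoproduct.inv_hom, reassoc_of% hw, Iso.hom_inv_id, Category.comp_id,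
    Iso.hom_inv_id_app_assoc]

theorem CategoryTheory.Equivalence.exists_retract_yoneda_inverse_obj_yoneda
    (e : (Cᵒᵖ ⥤ Type u) ≌ (Dᵒᵖ ⥤ Type u)) (d : D) :
    ∃ c : C, Nonempty (Retract (e.inverse.obj (yoneda.obj d)) (yoneda.obj c)) := by
  have := projective_yoneda_obj d
  have := (e.symm.map_projective_iff (yoneda.obj d)).mpr this
  exact exists_retract_yoneda_of_projective _ (e.exists_comp_sigma_ι_eq_inverse_yoneda d)

theorem exists_nonempty_obj_of_faithful (G : (Dᵒᵖ ⥤ Type u) ⥤ (Cᵒᵖ ⥤ Type u)) [G.Faithful]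
    (d : D) : ∃ c : C, Nonempty ((G.obj (yoneda.obj d)).obj (op c)) := by
  by_contra! hempty
  let W : Dᵒᵖ ⥤ Type u := (Functor.const Dᵒᵖ).obj (ULift Bool)
  have h : (yonedaEquiv.symm (ULift.up true : ULift Bool) : yoneda.obj d ⟶ W) =
      yonedaEquiv.symm (ULift.up false : ULift Bool) :=
    G.map_injective (by ext c x; exact (hempty c.unop).false x |>.elim)
  simpa using congrArg (ULift.down ∘ yonedaEquiv) h

theorem eq_of_comp_eq_of_retract (hC : ∀ {a b : C} (f : a ⟶ b), Epi f)
    {P Q R : Cᵒᵖ ⥤ Type u} {c q r : C} (x : P.obj (op c)) (hQ : Retract Q (yoneda.obj q))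
    (hR : Retract R (yoneda.obj r)) (g : P ⟶ Q) {α β : Q ⟶ R} (h : g ≫ α = g ≫ β) :
    α = β := by
  let φ : (Q ⟶ R) → (q ⟶ r) := fun k => yoneda.preimage (hQ.r ≫ k ≫ hR.i)
  have hφ : φ α = φ β := (hC (yoneda.preimage (yonedaEquiv.symm x ≫ g ≫ hQ.i))).left_cancellation
    _ _ (yoneda.map_injective (by simp [φ, reassoc_of% h]))
  calc α = hQ.i ≫ yoneda.map (φ α) ≫ hR.r := by simp [φ]
    _ = β := by rw [hφ]; simp [φ]

theorem epi_of_equivalence (hC : ∀ {a b : C} (f : a ⟶ b), Epi f)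
    (e : (Cᵒᵖ ⥤ Type u) ≌ (Dᵒᵖ ⥤ Type u)) {a b : D} (t : a ⟶ b) : Epi t := by
  refine ⟨fun {c} α β h => ?_⟩
  obtain ⟨p, ⟨x⟩⟩ := exists_nonempty_obj_of_faithful e.inverse a
  obtain ⟨q, ⟨hQ⟩⟩ := e.exists_retract_yoneda_inverse_obj_yoneda b
  obtain ⟨r, ⟨hR⟩⟩ := e.exists_retract_yoneda_inverse_obj_yoneda c
  refine yoneda.map_injective (e.inverse.map_injective
    (eq_of_comp_eq_of_retract hC x hQ hR (e.inverse.map (yoneda.map t)) ?_))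
  simp only [← Functor.map_comp, h]

end Presheaf

/-- Being locally E-unitary is a Morita invariant of inverse semigroups: if the
classifying toposes `PSh(L(S))` and `PSh(L(T))` are equivalent and `S` is locally
E-unitary, then so is `T`. -/
theorem locallyEUnitary_of_morita_equivalent
    (S T : Type u) [InverseSemigroup S] [InverseSemigroup T]
    (h : Nonempty (((LCat S)ᵒᵖ ⥤ Type u) ≌ ((LCat T)ᵒᵖ ⥤ Type u)))
    (hS : LocallyEUnitary S) : LocallyEUnitary T := by
  obtain ⟨e⟩ := h
  rw [locallyEUnitary_iff_forall_epi] at hS ⊢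
  exact epi_of_equivalence hS e
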